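/- For fixed t > 0 and x > 0, the function z ↦ q_x(t,x,z)/q(t,x,z) is strictly increasing on (0,∞), and its limit as z ↓ 0 equals 1/x - x/t. -/

import Mathlib

open Real Set Filter

noncomputable def q (t x y : ℝ) : ℝ :=
  (Real.sqrt (2 * Real.pi * t))⁻¹ *
    (Real.exp (-(x - y) ^ 2 / (2 * t)) - Real.exp (-(x + y) ^ 2 / (2 * t)))

open Topology

/-!
Factor the heat kernel as `q t x z = 2 (2πt)^{-1/2} e^{-(x² + z²)/(2t)} sinh (x z / t)`. Then
`q_x / q = φ (x z / t) / x - x / t` with `φ u = u / tanh u`. The function `φ` increases on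
`(0, ∞)` because `φ' u = (sinh u cosh u - u) / sinh² u` and `sinh (2u) > 2u`, and `φ u → 1` as
`u → 0` because `sinh u / u → cosh 0`.
-/

namespace Real

theorem hasDerivAt_div_tanh {u : ℝ} (hu : u ≠ 0) :
    HasDerivAt (fun v => v / tanh v) ((sinh u * cosh u - u) / sinh u ^ 2) u := by
  have hsinh : sinh u ≠ 0 := sinh_ne_zero.mpr hu
  have hfun : (fun v => v / tanh v) = fun v => v * cosh v / sinh v := by
    funext v
    rw [tanh_eq_sinh_div_cosh, div_div_eq_mul_div]
  rw [hfun]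
  refine (((hasDerivAt_id' u).mul (hasDerivAt_cosh u)).div (hasDerivAt_sinh u) hsinh).congr_deriv
    ?_
  simp only [Pi.mul_apply, one_mul]
  field_simp
  linear_combination -u * cosh_sq_sub_sinh_sq u

theorem strictMonoOn_div_tanh : StrictMonoOn (fun u : ℝ => u / tanh u) (Ioi 0) := by
  refine strictMonoOn_of_deriv_pos (convex_Ioi 0)
    (fun u hu => (hasDerivAt_div_tanh (ne_of_gt hu)).continuousAt.continuousWithinAt) ?_
  rw [interior_Ioi]
  intro u (hu : 0 < u)
  rw [(hasDerivAt_div_tanh hu.ne').deriv]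
  have hu2 : 2 * u < 2 * sinh u * cosh u := by
    rw [← sinh_two_mul]; exact self_lt_sinh_iff.mpr (by positivity)
  have hsinh : 0 < sinh u := sinh_pos_iff.mpr hu
  exact div_pos (by linarith) (by positivity)

theorem tendsto_div_tanh_nhdsNE_zero : Tendsto (fun u : ℝ => u / tanh u) (𝓝[≠] 0) (𝓝 1) := by
  have hslope : Tendsto (slope sinh 0) (𝓝[≠] 0) (𝓝 1) := by
    simpa using hasDerivAt_iff_tendsto_slope.mp (hasDerivAt_sinh 0)
  have hcosh : Tendsto cosh (𝓝[≠] 0) (𝓝 1) := by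
    simpa using continuous_cosh.continuousWithinAt.tendsto (s := {0}ᶜ) (x := 0)
  refine (div_one (1 : ℝ) ▸ hcosh.div hslope one_ne_zero).congr fun u => ?_
  simp [slope_def_field, tanh_eq_sinh_div_cosh, div_div_eq_mul_div, mul_comm]

end Real

theorem q_eq_sinh (t x z : ℝ) :
    q t x z = 2 * (√(2 * π * t))⁻¹ * exp (-(x ^ 2 + z ^ 2) / (2 * t)) * sinh (x * z / t) := by
  have hsub : -(x - z) ^ 2 / (2 * t) = -(x ^ 2 + z ^ 2) / (2 * t) + x * z / t := by ring
  have hadd : -(x + z) ^ 2 / (2 * t) = -(x ^ 2 + z ^ 2) / (2 * t) + -(x * z / t) := by ring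
  rw [q, hsub, hadd, exp_add, exp_add, sinh_eq]
  ring

theorem hasDerivAt_q (t x z : ℝ) :
    HasDerivAt (fun x' => q t x' z)
      (2 * (√(2 * π * t))⁻¹ * exp (-(x ^ 2 + z ^ 2) / (2 * t)) *
        (z / t * cosh (x * z / t) - x / t * sinh (x * z / t))) x := by
  simp only [q_eq_sinh]
  have hexponent : HasDerivAt (fun x' => -(x' ^ 2 + z ^ 2) / (2 * t)) (-(2 * x) / (2 * t)) x := by
    simpa using (((hasDerivAt_pow 2 x).add_const (z ^ 2)).neg).div_const (2 * t)
  have hgauss := hexponent.exp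
  have hsinh := (((hasDerivAt_id' x).mul_const z).div_const t).sinh
  refine ((hgauss.const_mul _).mul hsinh).congr_deriv ?_
  ring

theorem deriv_q_div_q {t x z : ℝ} (ht : 0 < t) (hx : x ≠ 0) (hz : z ≠ 0) :
    deriv (fun x' => q t x' z) x / q t x z = x * z / t / tanh (x * z / t) / x - x / t := by
  have hsqrt : √(2 * π * t) ≠ 0 := (sqrt_pos.mpr (by positivity)).ne'
  have hsinh : sinh (x * z / t) ≠ 0 := sinh_ne_zero.mpr (by positivity)
  rw [(hasDerivAt_q t x z).deriv, q_eq_sinh, tanh_eq_sinh_div_cosh]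
  field_simp

theorem stmt_3 (t x : ℝ) (ht : 0 < t) (hx : 0 < x) :
    StrictMonoOn (fun z => deriv (fun x' => q t x' z) x / q t x z) (Set.Ioi (0 : ℝ)) ∧
      Tendsto (fun z => deriv (fun x' => q t x' z) x / q t x z)
        (nhdsWithin 0 (Set.Ioi (0 : ℝ))) (nhds (1 / x - x / t)) := by
  have hratio : EqOn (fun z => x * z / t / tanh (x * z / t) / x - x / t)
      (fun z => deriv (fun x' => q t x' z) x / q t x z) (Ioi 0) :=
    fun z (hz : 0 < z) => (deriv_q_div_q ht hx.ne' hz.ne').symm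
  refine ⟨StrictMonoOn.congr ?_ hratio, Tendsto.congr' (eventuallyEq_nhdsWithin_of_eqOn hratio) ?_⟩
  · intro a (ha : 0 < a) b (hb : 0 < b) hab
    have hφ := strictMonoOn_div_tanh (show 0 < x * a / t by positivity)
      (show 0 < x * b / t by positivity) (by gcongr)
    exact sub_lt_sub_right (div_lt_div_of_pos_right hφ hx) _
  · have hscale : Tendsto (fun z => x * z / t) (𝓝[>] 0) (𝓝[≠] 0) := by
      refine tendsto_nhdsWithin_of_tendsto_nhds_of_eventually_within _ ?_ ?_
      · exact (((continuous_const_mul x).div_const t).tendsto' 0 0 (by simp)).mono_left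
          nhdsWithin_le_nhds
      · filter_upwards [self_mem_nhdsWithin] with z (hz : 0 < z)
        exact (by positivity : x * z / t ≠ 0)
    simpa using ((tendsto_div_tanh_nhdsNE_zero.comp hscale).div_const x).sub_const (x / t)
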